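/- In a Courant algebroid (original skew-symmetric definition), the identity T(e₁, e₂, Df) = (1/4)·ρ([e₁,e₂])f holds for all sections e₁, e₂ and smooth functions f, where T(e₁,e₂,e₃) = (1/6)(⟨[e₁,e₂],e₃⟩ + cyclic permutations). -/
import Mathlib


/-- A Courant algebroid in the original (skew-symmetric) formulation of
Liu–Weinstein–Xu, presented algebraically: `C` plays the role of the algebra of
smooth functions on the base, `E` the module of sections, the anchor `ρ` takes
values in derivations of `C`, and `D : C → E` satisfies `⟨Df, e⟩ = ρ(e)f`.
Axiom 1 states that the Jacobiator equals `D T` where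
`T(e₁,e₂,e₃) = (1/6)(⟨[e₁,e₂],e₃⟩ + c.p.)`. -/
structure CourantAlgebroidSkew (C E : Type*) [CommRing C] [Algebra ℝ C]
    [AddCommGroup E] [Module ℝ E] [Module C E] [IsScalarTower ℝ C E] where
  bracket : E →ₗ[ℝ] E →ₗ[ℝ] E
  form : E →ₗ[C] E →ₗ[C] C
  rho : E →ₗ[C] Derivation ℝ C C
  Dop : C →ₗ[ℝ] E
  bracket_skew : ∀ e₁ e₂, bracket e₁ e₂ = - bracket e₂ e₁
  form_symm : ∀ e h, form e h = form h e
  form_nondeg : ∀ e, (∀ h, form e h = 0) → e = 0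
  D_def : ∀ (f : C) (e : E), form (Dop f) e = rho e f
  axiom1 : ∀ e₁ e₂ e₃,
    bracket (bracket e₁ e₂) e₃ + bracket (bracket e₂ e₃) e₁ + bracket (bracket e₃ e₁) e₂ =
      Dop ((1/6 : ℝ) • (form (bracket e₁ e₂) e₃ + form (bracket e₂ e₃) e₁ +
        form (bracket e₃ e₁) e₂))
  axiom2 : ∀ e₁ e₂, rho (bracket e₁ e₂) = ⁅rho e₁, rho e₂⁆
  axiom3 : ∀ (e₁ e₂ : E) (f : C), bracket e₁ (f • e₂) =
    f • bracket e₁ e₂ + rho e₁ f • e₂ - (1/2 : ℝ) • (form e₁ e₂ • Dop f)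
  axiom4 : ∀ f g : C, form (Dop f) (Dop g) = 0
  axiom5 : ∀ e h₁ h₂, rho e (form h₁ h₂) =
    form (bracket e h₁ + (1/2 : ℝ) • Dop (form e h₁)) h₂ +
      form h₁ (bracket e h₂ + (1/2 : ℝ) • Dop (form e h₂))

/-- The Jacobiator of the skew-symmetric bracket. -/
noncomputable def CourantAlgebroidSkew.J {C E : Type*} [CommRing C] [Algebra ℝ C]
    [AddCommGroup E] [Module ℝ E] [Module C E] [IsScalarTower ℝ C E]
    (A : CourantAlgebroidSkew C E) (e₁ e₂ e₃ : E) : E :=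
  A.bracket (A.bracket e₁ e₂) e₃ + A.bracket (A.bracket e₂ e₃) e₁ +
    A.bracket (A.bracket e₃ e₁) e₂

/-- `T(e₁,e₂,e₃) = (1/6)(⟨[e₁,e₂],e₃⟩ + cyclic permutations)`. -/
noncomputable def CourantAlgebroidSkew.T {C E : Type*} [CommRing C] [Algebra ℝ C]
    [AddCommGroup E] [Module ℝ E] [Module C E] [IsScalarTower ℝ C E]
    (A : CourantAlgebroidSkew C E) (e₁ e₂ e₃ : E) : C :=
  (1/6 : ℝ) • (A.form (A.bracket e₁ e₂) e₃ + A.form (A.bracket e₂ e₃) e₁ +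
    A.form (A.bracket e₃ e₁) e₂)


lemma CourantAlgebroidSkew.bracket_D {C E : Type*} [CommRing C] [Algebra ℝ C]
    [AddCommGroup E] [Module ℝ E] [Module C E] [IsScalarTower ℝ C E]
    (A : CourantAlgebroidSkew C E) (e : E) (f : C) :
    A.bracket e (A.Dop f) = (1/2 : ℝ) • A.Dop (A.rho e f) := by
  have h0 : A.bracket e (A.Dop f) - (1/2 : ℝ) • A.Dop (A.rho e f) = 0 := by
    apply A.form_nondeg
    intro h
    have h5 := A.axiom5 e (A.Dop f) h
    rw [A.D_def, A.form_symm e (A.Dop f), A.D_def] at h5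
    have hb : A.form (A.Dop f) (A.bracket e h) = A.rho (A.bracket e h) f := A.D_def _ _
    have hcomm : A.rho (A.bracket e h) f = A.rho e (A.rho h f) - A.rho h (A.rho e f) := by
      rw [A.axiom2]; rfl
    have hD : A.form (A.Dop (A.rho e f)) h = A.rho h (A.rho e f) := A.D_def _ _
    simp only [map_add, map_sub, LinearMap.map_smul_of_tower, LinearMap.add_apply,
      LinearMap.sub_apply, LinearMap.smul_apply, A.axiom4, smul_zero, add_zero,
      hb, hcomm, hD, Algebra.smul_def] at h5 ⊢
    have hhalf : (algebraMap ℝ C) (1/2 : ℝ) * 2 = 1 := by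
      rw [← map_ofNat (algebraMap ℝ C) 2, ← map_mul]; norm_num
    linear_combination -h5 - (A.rho h) ((A.rho e) f) * hhalf
  exact sub_eq_zero.mp h0

/-- In a Courant algebroid (original skew-symmetric definition), the identity
`T(e₁, e₂, Df) = (1/4)·ρ([e₁,e₂])f` holds. -/
theorem courant_skew_T_D {C E : Type*} [CommRing C] [Algebra ℝ C]
    [AddCommGroup E] [Module ℝ E] [Module C E] [IsScalarTower ℝ C E]
    (A : CourantAlgebroidSkew C E) (e₁ e₂ : E) (f : C) :
    A.T e₁ e₂ (A.Dop f) = (1/4 : ℝ) • (A.rho (A.bracket e₁ e₂) f) := by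
  have h12 : A.form (A.bracket e₁ e₂) (A.Dop f) = A.rho (A.bracket e₁ e₂) f := by
    rw [A.form_symm, A.D_def]
  have h2 : A.form (A.bracket e₂ (A.Dop f)) e₁ = (1/2 : ℝ) • A.rho e₁ (A.rho e₂ f) := by
    rw [A.bracket_D, LinearMap.map_smul_of_tower, LinearMap.smul_apply, A.D_def]
  have h1 : A.form (A.bracket (A.Dop f) e₁) e₂ = -((1/2 : ℝ) • A.rho e₂ (A.rho e₁ f)) := by
    rw [A.bracket_skew, A.bracket_D, map_neg, LinearMap.map_smul_of_tower, LinearMap.neg_apply,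
      LinearMap.smul_apply, A.D_def]
  have hc : A.rho (A.bracket e₁ e₂) f = A.rho e₁ (A.rho e₂ f) - A.rho e₂ (A.rho e₁ f) := by
    rw [A.axiom2]; rfl
  unfold CourantAlgebroidSkew.T
  rw [h12, h2, h1, hc]
  module
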